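/- Let F be a nonempty bounded spectrahedron contained in a proper face of S^n_+, with A surjective, and fix ᾱ > 0. Then for every sequence α_k ∈ (0, ᾱ] with α_k → 0, the matrices X(α_k) (the unique log det maximizers over F(α_k)) form a bounded sequence, and every cluster point lies in F. -/

import Mathlib

/-!
Boundedness of `F` forces the PSD cone to meet the kernel of the constraint map
`𝒜 X = (tr (Sᵢ X))ᵢ` only at `0` (otherwise `F` would contain a ray). The continuous function
`‖𝒜 D‖` is then positive on the compact base `{D ⪰ 0, tr D = 1}` of the cone, so
`c · tr X ≤ ‖𝒜 X‖` for some `c > 0` and all `X ⪰ 0`. Since `𝒜 X(αₖ) = b + αₖ 𝒜 I` with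
`αₖ ≤ ᾱ`, the traces, hence all entries, of the `X(αₖ)` are uniformly bounded. A cluster point
is PSD because the cone is closed, and satisfies `𝒜 L = b` because `𝒜 X(αₖ) → b`.
-/

open Matrix Filter Topology

lemma MapClusterPt.mem_of_eventually_mem {X α : Type*} [TopologicalSpace X] {F : Filter α}
    {u : α → X} {x : X} {C : Set X} (hx : MapClusterPt x F u) (hC : IsClosed C)
    (hu : ∀ᶠ a in F, u a ∈ C) : x ∈ C := by
  by_contra hxC
  obtain ⟨a, hCa, ha⟩ := (hx.frequently (hC.isOpen_compl.mem_nhds hxC)).and_eventually hu |>.exists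
  exact hCa ha

lemma MapClusterPt.eq_of_tendsto {X α : Type*} [TopologicalSpace X] [T2Space X] {F : Filter α}
    {u : α → X} {x y : X} (hx : MapClusterPt x F u) (hu : Tendsto u F (𝓝 y)) : x = y :=
  eq_of_nhds_neBot (hx.clusterPt.mono hu)

lemma nonpos_of_forall_nonneg_add_mul_le {a b M : ℝ} (h : ∀ t : ℝ, 0 ≤ t → a + t * b ≤ M) :
    b ≤ 0 := by
  by_contra! hb
  have := h ((|M - a| + 1) / b) (by positivity)
  rw [div_mul_cancel₀ _ hb.ne'] at this
  linarith [le_abs_self (M - a)]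

namespace Matrix

variable {ι : Type*}

namespace PosSemidef

variable {A : Matrix ι ι ℝ}

lemma two_mul_abs_apply_le (hA : A.PosSemidef) (i j : ι) : 2 * |A i j| ≤ A i i + A j j := by
  classical
  rcases eq_or_ne i j with rfl | hij
  · rw [abs_of_nonneg hA.diag_nonneg]; linarith
  have hsymm : A j i = A i j := by simpa using hA.1.apply i j
  have quad (s : ℝ) : 0 ≤ A i i + 2 * s * A i j + s ^ 2 * A j j := by
    have := hA.2 (Finsupp.single i 1 + Finsupp.single j s)
    simp [Finsupp.sum_add_index, mul_add, add_mul, hsymm] at this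
    linear_combination this
  have hplus := quad 1
  have hminus := quad (-1)
  norm_num at hplus hminus
  rcases abs_cases (A i j) with ⟨h, -⟩ | ⟨h, -⟩ <;> rw [h] <;> linarith

variable [Fintype ι]

lemma diag_le_trace (hA : A.PosSemidef) (i : ι) : A i i ≤ A.trace :=
  Finset.single_le_sum (f := A.diag) (fun _ _ => hA.diag_nonneg) (Finset.mem_univ i)

lemma abs_apply_le_trace (hA : A.PosSemidef) (i j : ι) : |A i j| ≤ A.trace := by
  linarith [hA.two_mul_abs_apply_le i j, hA.diag_le_trace i, hA.diag_le_trace j]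

lemma eq_zero_of_ray_subset_bounded {C : Set (Matrix ι ι ℝ)} {M : ℝ}
    (hC : ∀ X ∈ C, ∀ i j, |X i j| ≤ M) {X₀ : Matrix ι ι ℝ} (hA : A.PosSemidef)
    (hray : ∀ t : ℝ, 0 ≤ t → X₀ + t • A ∈ C) : A = 0 := by
  refine hA.trace_eq_zero_iff.mp (Finset.sum_eq_zero fun i _ => le_antisymm ?_ hA.diag_nonneg)
  exact nonpos_of_forall_nonneg_add_mul_le fun t ht =>
    (le_abs_self _).trans (by simpa using hC _ (hray t ht) i i)

end PosSemidef

variable [Fintype ι]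

lemma isClosed_setOf_posSemidef : IsClosed {A : Matrix ι ι ℝ | A.PosSemidef} := by
  have hps : {A : Matrix ι ι ℝ | A.PosSemidef}
      = {A | Aᴴ = A} ∩ ⋂ x : ι → ℝ, {A | 0 ≤ star x ⬝ᵥ (A *ᵥ x)} := by
    ext A
    simp only [Set.mem_ofPred_eq, Set.mem_inter_iff, Set.mem_iInter]
    exact posSemidef_iff_dotProduct_mulVec
  rw [hps]
  exact (isClosed_eq continuous_id.matrix_conjTranspose continuous_id).inter
    (isClosed_iInter fun x => isClosed_le continuous_const
      (continuous_const.dotProduct (continuous_id.matrix_mulVec continuous_const)))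

lemma isCompact_setOf_posSemidef_trace_eq_one :
    IsCompact {A : Matrix ι ι ℝ | A.PosSemidef ∧ A.trace = 1} := by
  refine (isCompact_univ_pi fun _ => isCompact_univ_pi fun _ => isCompact_Icc (a := -1) (b := 1))
    |>.of_isClosed_subset (isClosed_setOf_posSemidef.inter
      (isClosed_eq continuous_id.matrix_trace continuous_const)) fun A ⟨hA, htr⟩ => ?_
  simp only [Set.mem_univ_pi]
  exact fun i j => abs_le.mp (htr ▸ hA.abs_apply_le_trace i j)

lemma exists_pos_mul_trace_le_norm {E : Type*} [NormedAddCommGroup E] [NormedSpace ℝ E]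
    (A : Matrix ι ι ℝ →ₗ[ℝ] E) (hA : ∀ D : Matrix ι ι ℝ, D.PosSemidef → A D = 0 → D = 0) :
    ∃ c > 0, ∀ X : Matrix ι ι ℝ, X.PosSemidef → c * X.trace ≤ ‖A X‖ := by
  obtain ⟨c, hc, hcK⟩ := isCompact_setOf_posSemidef_trace_eq_one.exists_forall_le'
    A.continuous_of_finiteDimensional.norm.continuousOn (a := 0) fun D ⟨hD, htr⟩ =>
      norm_pos_iff.mpr fun h => by simp [hA D hD h] at htr
  refine ⟨c, hc, fun X hX => ?_⟩
  rcases hX.trace_nonneg.eq_or_lt with htr | htr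
  · rw [← htr, mul_zero]; exact norm_nonneg _
  have hnorm := hcK (X.trace⁻¹ • X) ⟨hX.smul (inv_nonneg.mpr htr.le), by simp [htr.ne']⟩
  rw [map_smul, norm_smul, Real.norm_of_nonneg (inv_nonneg.mpr htr.le), le_inv_mul_iff₀ htr]
    at hnorm
  linarith

def traceMulMap {κ : Type*} (S : κ → Matrix ι ι ℝ) : Matrix ι ι ℝ →ₗ[ℝ] κ → ℝ where
  toFun X i := (S i * X).trace
  map_add' X Y := by ext i; simp [Matrix.mul_add]
  map_smul' c X := by ext i; simp

end Matrix

theorem stmt19 {n m : ℕ} (S : Fin m → Matrix (Fin n) (Fin n) ℝ)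
    (b : Fin m → ℝ)
    (F : Set (Matrix (Fin n) (Fin n) ℝ))
    (hF : F = {X | X.PosSemidef ∧ ∀ i, (S i * X).trace = b i})
    (Fα : ℝ → Set (Matrix (Fin n) (Fin n) ℝ))
    (hFα : ∀ α : ℝ, Fα α = {X | X.PosSemidef ∧ ∀ i, (S i * X).trace = b i + α * (S i).trace})
    (hne : F.Nonempty)
    (hbdd : ∃ M : ℝ, ∀ X ∈ F, ∀ i j, |X i j| ≤ M)
    (αbar : ℝ)
    (α : ℕ → ℝ) (hα : ∀ k, 0 < α k ∧ α k ≤ αbar)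
    (hαlim : Filter.Tendsto α Filter.atTop (nhds 0))
    (X : ℕ → Matrix (Fin n) (Fin n) ℝ)
    (hX : ∀ k, X k ∈ Fα (α k) ∧ (X k).PosDef ∧ ∀ Y ∈ Fα (α k), Y.det ≤ (X k).det) :
    (∃ M : ℝ, ∀ k, ∀ i j, |X k i j| ≤ M) ∧
    ∀ L, MapClusterPt L Filter.atTop X → L ∈ F := by
  set A := traceMulMap S
  obtain rfl : F = {X | X.PosSemidef ∧ A X = b} := by simp only [hF, funext_iff]; rfl
  have hXk (k : ℕ) : (X k).PosSemidef ∧ A (X k) = b + α k • A 1 := by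
    obtain ⟨hpsd, htr⟩ := hFα (α k) ▸ (hX k).1
    exact ⟨hpsd, funext fun i => by simpa [A, traceMulMap] using htr i⟩
  obtain ⟨M₀, hM₀⟩ := hbdd
  obtain ⟨X₀, hX₀psd, hAX₀⟩ := hne
  have hrec (D : Matrix (Fin n) (Fin n) ℝ) (hD : D.PosSemidef) (hAD : A D = 0) : D = 0 :=
    hD.eq_zero_of_ray_subset_bounded hM₀ fun t ht =>
      ⟨hX₀psd.add (hD.smul ht), by simp [hAX₀, hAD]⟩
  obtain ⟨c, hc, hcoer⟩ := exists_pos_mul_trace_le_norm A hrec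
  refine ⟨⟨(‖b‖ + αbar * ‖A 1‖) / c, fun k i j => ?_⟩, fun L hL => ⟨?_, ?_⟩⟩
  · refine (hXk k).1.abs_apply_le_trace i j |>.trans ((le_div_iff₀' hc).mpr ?_)
    calc c * (X k).trace ≤ ‖b + α k • A 1‖ := (hXk k).2 ▸ hcoer _ (hXk k).1
      _ ≤ ‖b‖ + α k * ‖A 1‖ := by
        grw [norm_add_le, norm_smul, Real.norm_of_nonneg (hα k).1.le]
      _ ≤ ‖b‖ + αbar * ‖A 1‖ := by gcongr; exact (hα k).2
  · exact hL.mem_of_eventually_mem isClosed_setOf_posSemidef (.of_forall fun k => (hXk k).1)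
  · refine (hL.continuousAt_comp A.continuous_of_finiteDimensional.continuousAt).eq_of_tendsto ?_
    have : Tendsto (fun k => b + α k • A 1) atTop (𝓝 b) := by
      simpa using tendsto_const_nhds.add (hαlim.smul_const (A 1))
    simpa [Function.comp_def, (hXk _).2] using this
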